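/- If no element occurs in both u and v (the sets of elements appearing in u and in v are disjoint), then the edit (Levenshtein) distance between u and v equals max(|u|, |v|). (Disjoint-alphabet lemma used in the proofs of Theorems 2.2 and 4.5.) -/

import Mathlib

namespace Levenshtein

/-- A cost structure for Levenshtein edit distance. -/
structure Cost (α β δ : Type*) where
  /-- Cost to delete an element from a list. -/
  delete : α → δ
  /-- Cost in insert an element into a list. -/
  insert : β → δ
  /-- Cost to substitute one element for another in a list. -/
  substitute : α → β → δ

/-- The default cost structure, for which all operations cost `1`. -/
def defaultCost {α : Type*} [DecidableEq α] : Cost α α ℕ where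
  delete _ := 1
  insert _ := 1
  substitute a b := if a = b then 0 else 1

/-- (Implementation detail for `levenshtein`) -/
def impl {α β δ : Type*} [AddZeroClass δ] [Min δ] (C : Cost α β δ)
    (xs : List α) (y : β) (d : {r : List δ // 0 < r.length}) : {r : List δ // 0 < r.length} :=
  let ⟨ds, w⟩ := d
  xs.zip (ds.zip ds.tail) |>.foldr
    (init := ⟨[C.insert y + ds.getLast (List.ne_nil_of_length_pos w)], by simp⟩)
    (fun ⟨x, d₀, d₁⟩ ⟨r, w⟩ =>
      ⟨min (C.delete x + r[0]) (min (C.insert y + d₀) (C.substitute x y + d₁)) :: r, by simp⟩)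

end Levenshtein

open Levenshtein

/-- `suffixLevenshtein C xs ys` computes the Levenshtein distance
(using the cost functions provided by a `C : Cost α β δ`)
from each suffix of the list `xs` to the list `ys`. -/
def suffixLevenshtein {α β δ : Type*} [AddZeroClass δ] [Min δ] (C : Cost α β δ)
    (xs : List α) (ys : List β) : {r : List δ // 0 < r.length} :=
  ys.foldr
    (impl C xs)
    (xs.foldr (init := ⟨[0], by simp⟩) (fun a ⟨r, w⟩ => ⟨(C.delete a + r[0]) :: r, by simp⟩))

/-- `levenshtein C xs ys` computes the Levenshtein distance
(using the cost functions provided by a `C : Cost α β δ`)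
from the list `xs` to the list `ys`. -/
def levenshtein {α β δ : Type*} [AddZeroClass δ] [Min δ] (C : Cost α β δ)
    (xs : List α) (ys : List β) : δ :=
  let ⟨r, _⟩ := suffixLevenshtein C xs ys
  r[0]

section LevAux
variable {α β δ : Type*} [AddZeroClass δ] [Min δ] (C : Cost α β δ)

private theorem lev_impl_cons {x : α} {xs : List α} {y : β} {d : δ} {ds : List δ} {w}
    (w' : 0 < List.length ds) :
    impl C (x :: xs) y ⟨d :: ds, w⟩ =
      let ⟨r, w⟩ := impl C xs y ⟨ds, w'⟩
      ⟨min (C.delete x + r[0]) (min (C.insert y + d) (C.substitute x y + ds[0])) :: r, by simp⟩ :=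
  match ds, w' with | _ :: _, _ => rfl

private theorem lev_impl_cons_fst_zero {x : α} {xs : List α} {y : β} {d : δ} {ds : List δ} {w}
    (h) (w' : 0 < List.length ds) :
    (impl C (x :: xs) y ⟨d :: ds, w⟩).1[0]'h =
      let ⟨r, w⟩ := impl C xs y ⟨ds, w'⟩
      min (C.delete x + r[0]) (min (C.insert y + d) (C.substitute x y + ds[0])) :=
  match ds, w' with | _ :: _, _ => rfl

private theorem lev_impl_length {xs : List α} {y : β} (d : {r : List δ // 0 < r.length})
    (w : d.1.length = xs.length + 1) :
    (impl C xs y d).1.length = xs.length + 1 := by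
  induction xs generalizing d with
  | nil => rfl
  | cons x xs ih =>
    dsimp [impl]
    match d, w with
    | ⟨d₁ :: d₂ :: ds, _⟩, w =>
      dsimp
      congr 1
      exact ih ⟨d₂ :: ds, (by simp)⟩ (by simpa using w)

private theorem lev_suffix_length (xs : List α) (ys : List β) :
    (suffixLevenshtein C xs ys).1.length = xs.length + 1 := by
  induction ys with
  | nil =>
    dsimp [suffixLevenshtein]
    induction xs with
    | nil => rfl
    | cons _ xs ih =>
      simp_all
  | cons y ys ih =>
    dsimp [suffixLevenshtein]
    rw [lev_impl_length]
    exact ih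

private theorem lev_suffix_cons₂ (xs : List α) (y ys) :
    suffixLevenshtein C xs (y :: ys) = (impl C xs) y (suffixLevenshtein C xs ys) := rfl

private theorem lev_suffix_cons₁_aux {α} {x y : {r : List α // 0 < r.length}}
    (w₀ : x.1[0]'x.2 = y.1[0]'y.2) (w : x.1.tail = y.1.tail) : x = y := by
  match x, y with
  | ⟨hx :: tx, _⟩, ⟨hy :: ty, _⟩ => simp_all

private theorem lev_suffix_cons₁ (x : α) (xs ys) :
    suffixLevenshtein C (x :: xs) ys =
      ⟨levenshtein C (x :: xs) ys ::
        (suffixLevenshtein C xs ys).1, by simp⟩ := by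
  induction ys with
  | nil =>
    rfl
  | cons y ys ih =>
    apply lev_suffix_cons₁_aux
    · rfl
    · rw [lev_suffix_cons₂ C (x :: xs), ih, lev_impl_cons]
      · rfl
      · simp [lev_suffix_length]

private theorem lev_suffix_cons_cons_fst_get_zero
    (x : α) (xs y ys) (w) :
    (suffixLevenshtein C (x :: xs) (y :: ys)).1[0]'w =
      let ⟨dx, _⟩ := suffixLevenshtein C xs (y :: ys)
      let ⟨dy, _⟩ := suffixLevenshtein C (x :: xs) ys
      let ⟨dxy, _⟩ := suffixLevenshtein C xs ys
      min
        (C.delete x + dx[0])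
        (min
          (C.insert y + dy[0])
          (C.substitute x y + dxy[0])) := by
  conv =>
    lhs
    dsimp only [lev_suffix_cons₂]
  simp only [lev_suffix_cons₁]
  rw [lev_impl_cons_fst_zero]
  rfl

@[simp] theorem levenshtein_nil_nil : levenshtein C [] [] = 0 := by
  simp [levenshtein, suffixLevenshtein]

@[simp] theorem levenshtein_nil_cons (y) (ys) :
    levenshtein C [] (y :: ys) = C.insert y + levenshtein C [] ys := by
  have hl := lev_suffix_length C [] ys
  change C.insert y + (suffixLevenshtein C [] ys).1.getLast _ =
    C.insert y + (suffixLevenshtein C [] ys).1[0]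
  have key : ∀ s : {r : List δ // 0 < r.length}, s.1.length = ([] : List α).length + 1 →
      ∀ h, s.1.getLast h = s.1[0]'s.2 := by
    rintro ⟨r, w⟩ hl h
    match r, w, hl, h with
    | [a], _, _, _ => rfl
  exact congrArg _ (key _ hl _)

@[simp] theorem levenshtein_cons_nil (x : α) (xs : List α) :
    levenshtein C (x :: xs) [] = C.delete x + levenshtein C xs [] :=
  rfl

theorem levenshtein_cons_cons
    (x : α) (xs : List α) (y : β) (ys : List β) :
    levenshtein C (x :: xs) (y :: ys) =
      min (C.delete x + levenshtein C xs (y :: ys))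
        (min (C.insert y + levenshtein C (x :: xs) ys)
          (C.substitute x y + levenshtein C xs ys)) :=
  lev_suffix_cons_cons_fst_get_zero ..

@[simp] theorem lev_defaultCost_delete {α : Type*} [DecidableEq α] (a : α) :
    (Levenshtein.defaultCost : Cost α α ℕ).delete a = 1 := rfl

@[simp] theorem lev_defaultCost_insert {α : Type*} [DecidableEq α] (a : α) :
    (Levenshtein.defaultCost : Cost α α ℕ).insert a = 1 := rfl

end LevAux

private lemma lev_nil_right {α : Type*} [DecidableEq α] (u : List α) :
    levenshtein Levenshtein.defaultCost u [] = u.length := by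
  induction u with
  | nil => simp
  | cons a u ih => simp [ih]; omega

private lemma lev_nil_left {α : Type*} [DecidableEq α] (v : List α) :
    levenshtein Levenshtein.defaultCost [] v = v.length := by
  induction v with
  | nil => simp
  | cons b v ih => simp [ih]; omega

/-- Disjoint-alphabet lemma: if no element occurs in both `u` and `v`, then
the edit (Levenshtein) distance between `u` and `v` equals
`max u.length v.length`. -/
theorem levenshtein_of_disjoint {α : Type*} [DecidableEq α] (u v : List α)
    (h : ∀ x ∈ u, x ∉ v) :
    levenshtein Levenshtein.defaultCost u v = max u.length v.length := by
  induction u generalizing v with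
  | nil => simp [lev_nil_left]
  | cons a u ih =>
    induction v with
    | nil => simp [lev_nil_right]; omega
    | cons b v ihv =>
      have hab : a ≠ b := by
        intro e; exact h a (by simp) (by simp [e])
      rw [levenshtein_cons_cons]
      rw [ih (b :: v) (fun x hx => h x (by simp [hx]))]
      rw [ih v (fun x hx hxv => h x (by simp [hx]) (by simp [hxv]))]
      rw [ihv (fun x hx hxv => by
        rcases List.mem_cons.1 hx with rfl | hx
        · exact h x (by simp) (by simp [hxv])
        · exact h x (by simp [hx]) (by simp [hxv]))]
      simp [Levenshtein.defaultCost, hab]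
      omega
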